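/- Let n, k be positive integers with gcd(n, n−k) = 1, let 1 ≤ i ≤ min{k+1, n−k−1}, and let S_{k,i} be a primitive nonpowerful signed digraph whose underlying digraph is D_{k,i}. If all cycles of length n−k in S_{k,i} have the same sign, then for every 1 ≤ m ≤ n the m-th smallest local base is attained at v_m and equals l_{S_{k,i}}(m) = l_{S_{k,i}}(v_m) = (2n−2)(n−k) + 1 − i + m. -/

import Mathlib

/-- `f : ℕ → V` traces a directed walk of length `t` in the digraph with
adjacency relation `A` if consecutive vertices are joined by arcs. -/
def IsWalk {V : Type*} (A : V → V → Prop) (t : ℕ) (f : ℕ → V) : Prop :=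
  ∀ i < t, A (f i) (f (i + 1))

/-- There is a directed walk of length `t` from `u` to `v`. -/
def HasWalk {V : Type*} (A : V → V → Prop) (t : ℕ) (u v : V) : Prop :=
  ∃ f : ℕ → V, f 0 = u ∧ f t = v ∧ IsWalk A t f

/-- A digraph is strongly connected if every vertex can reach every vertex. -/
def StronglyConnected {V : Type*} (A : V → V → Prop) : Prop :=
  ∀ u v : V, ∃ t : ℕ, HasWalk A t u v

/-- A digraph is primitive if it is strongly connected and for some `t > 0`
there are directed walks of length `t` between every ordered pair of vertices. -/
def IsPrimitive {V : Type*} (A : V → V → Prop) : Prop :=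
  StronglyConnected A ∧ ∃ t : ℕ, 0 < t ∧ ∀ u v : V, HasWalk A t u v

/-- The local exponent at `u`: the least `l` such that for every `t ≥ l` and
every vertex `v` there is a directed walk of length `t` from `u` to `v`. -/
noncomputable def localExp {V : Type*} (A : V → V → Prop) (u : V) : ℕ :=
  sInf {l : ℕ | ∀ t ≥ l, ∀ v : V, HasWalk A t u v}

/-- `kthSmallest f k` is the `k`-th smallest element (1-indexed) of the
multiset of values of `f`. -/
noncomputable def kthSmallest {n : ℕ} (f : Fin n → ℕ) (k : ℕ) : ℕ :=
  (Multiset.sort (Finset.univ.val.map f) (· ≤ ·)).getD (k - 1) 0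

/-- A directed cycle of length `c` (a closed walk whose first `c` vertices are
pairwise distinct), given by its vertex function. -/
def IsCycle {V : Type*} (A : V → V → Prop) (c : ℕ) (f : ℕ → V) : Prop :=
  IsWalk A c f ∧ f c = f 0 ∧ ∀ i < c, ∀ j < c, f i = f j → i = j

/-- A signed digraph: each arc carries a sign `+1` or `-1`. -/
structure SignedDigraph (V : Type*) where
  Adj : V → V → Prop
  sgn : V → V → ℤ
  sgn_unit : ∀ u v : V, Adj u v → sgn u v = 1 ∨ sgn u v = -1

namespace SignedDigraph

variable {V : Type*} (S : SignedDigraph V)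

/-- The sign of the walk of length `t` traced by `f`. -/
def walkSign (t : ℕ) (f : ℕ → V) : ℤ :=
  ∏ i ∈ Finset.range t, S.sgn (f i) (f (i + 1))

/-- There is a pair of SSSD walks of length `t` from `u` to `v`: two walks with
the same endpoints and the same length but different signs. -/
def HasSSSD (t : ℕ) (u v : V) : Prop :=
  ∃ f g : ℕ → V,
    (f 0 = u ∧ f t = v ∧ IsWalk S.Adj t f) ∧
    (g 0 = u ∧ g t = v ∧ IsWalk S.Adj t g) ∧
    S.walkSign t f ≠ S.walkSign t g

/-- A signed digraph is primitive and nonpowerful if from some length on there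
are SSSD walk pairs between all ordered pairs of vertices. -/
def IsPrimitiveNonpowerful : Prop :=
  ∃ l : ℕ, 0 < l ∧ ∀ t ≥ l, ∀ u v : V, S.HasSSSD t u v

/-- The local base at vertex `u`: the least `l` such that for every `t ≥ l` and
every vertex `v` there is a pair of SSSD walks of length `t` from `u` to `v`. -/
noncomputable def localBase (u : V) : ℕ :=
  sInf {l : ℕ | ∀ t ≥ l, ∀ v : V, S.HasSSSD t u v}

/-- All directed cycles of length `c` in `S` have the same sign. -/
def SameSignCycles (c : ℕ) : Prop :=
  ∀ f g : ℕ → V, IsCycle S.Adj c f → IsCycle S.Adj c g →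
    S.walkSign c f = S.walkSign c g

end SignedDigraph

/-- Isomorphism of digraphs. -/
def DigraphIso {V W : Type*} (A : V → V → Prop) (B : W → W → Prop) : Prop :=
  ∃ e : V ≃ W, ∀ u v : V, A u v ↔ B (e u) (e v)

/-- The Hamilton cycle `Cₙ` on `v₁,…,vₙ` (here `vⱼ` is the vertex with 0-based
index `j-1`), with arcs `v₁ → vₙ` and `vⱼ → v_{j-1}` for `2 ≤ j ≤ n`. -/
def CnAdj (n : ℕ) : Fin n → Fin n → Prop := fun a b =>
  (a.val = 0 ∧ b.val = n - 1) ∨ a.val = b.val + 1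

/-- The digraph `D_{k,i}`: the Hamilton cycle `Cₙ` together with the arcs
`vⱼ → v_{n-k+j-1}` for `1 ≤ j ≤ i`. -/
def DkiAdj (n k i : ℕ) : Fin n → Fin n → Prop := fun a b =>
  CnAdj n a b ∨ ∃ j : ℕ, 1 ≤ j ∧ j ≤ i ∧ a.val = j - 1 ∧ b.val = n - k + j - 2

/-- The digraph `𝓛`: `Cₙ` together with the arcs `v₁ → v_{n-2}` and `v₃ → vₙ`. -/
def LAdj (n : ℕ) : Fin n → Fin n → Prop := fun a b =>
  CnAdj n a b ∨ (a.val = 0 ∧ b.val = n - 3) ∨ (a.val = 2 ∧ b.val = n - 1)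

/-- The digraph `F`: the `(n-1)`-cycle `v₁ → vₙ → v_{n-1} → v_{n-3} → ⋯ → v₂ → v₁`
together with the arcs `v₁ → v_{n-2}` and `v_{n-2} → v_{n-3}`. -/
def FAdj (n : ℕ) : Fin n → Fin n → Prop := fun a b =>
  (a.val = 0 ∧ b.val = n - 1) ∨ (a.val = n - 1 ∧ b.val = n - 2) ∨
  (a.val = n - 2 ∧ b.val = n - 4) ∨ (a.val = b.val + 1 ∧ 1 ≤ a.val ∧ a.val ≤ n - 4) ∨
  (a.val = 0 ∧ b.val = n - 3) ∨ (a.val = n - 3 ∧ b.val = n - 4)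

/-- The digraph `F₁`: the `(n-1)`-cycle `v₁ → v_{n-1} → v_{n-2} → ⋯ → v₂ → v₁`
together with the arcs `v₁ → v_{n-2}`, `v₂ → vₙ` and `vₙ → v_{n-1}`. -/
def F1Adj (n : ℕ) : Fin n → Fin n → Prop := fun a b =>
  (a.val = 0 ∧ b.val = n - 2) ∨ (a.val = b.val + 1 ∧ 1 ≤ a.val ∧ a.val ≤ n - 2) ∨
  (a.val = 0 ∧ b.val = n - 3) ∨ (a.val = 1 ∧ b.val = n - 1) ∨ (a.val = n - 1 ∧ b.val = n - 2)

/-- The digraph `F₂`: the `(n-1)`-cycle `v₁ → vₙ → v_{n-2} → v_{n-3} → ⋯ → v₂ → v₁`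
together with the arcs `v₁ → v_{n-2}`, `vₙ → v_{n-1}` and `v_{n-1} → v_{n-3}`. -/
def F2Adj (n : ℕ) : Fin n → Fin n → Prop := fun a b =>
  (a.val = 0 ∧ b.val = n - 1) ∨ (a.val = n - 1 ∧ b.val = n - 3) ∨
  (a.val = b.val + 1 ∧ 1 ≤ a.val ∧ a.val ≤ n - 3) ∨
  (a.val = 0 ∧ b.val = n - 3) ∨ (a.val = n - 1 ∧ b.val = n - 2) ∨ (a.val = n - 2 ∧ b.val = n - 4)

/-- The digraph `F₃`: the `(n-2)`-cycle `v₁ → v_{n-2} → v_{n-3} → ⋯ → v₂ → v₁`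
together with the arcs `v₁ → v_{n-1}`, `v_{n-1} → v_{n-2}`, `v₁ → vₙ` and `vₙ → v_{n-2}`. -/
def F3Adj (n : ℕ) : Fin n → Fin n → Prop := fun a b =>
  (a.val = 0 ∧ b.val = n - 3) ∨ (a.val = b.val + 1 ∧ 1 ≤ a.val ∧ a.val ≤ n - 3) ∨
  (a.val = 0 ∧ b.val = n - 2) ∨ (a.val = n - 2 ∧ b.val = n - 3) ∨
  (a.val = 0 ∧ b.val = n - 1) ∨ (a.val = n - 1 ∧ b.val = n - 3)

/-- The digraph `F₇`: the `(n-1)`-cycle `v₁ → v_{n-1} → v_{n-2} → ⋯ → v₂ → v₁`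
together with the arcs `v₁ → v_{n-2}`, `v₃ → vₙ` and `vₙ → v_{n-1}`. -/
def F7Adj (n : ℕ) : Fin n → Fin n → Prop := fun a b =>
  (a.val = 0 ∧ b.val = n - 2) ∨ (a.val = b.val + 1 ∧ 1 ≤ a.val ∧ a.val ≤ n - 2) ∨
  (a.val = 0 ∧ b.val = n - 3) ∨ (a.val = 2 ∧ b.val = n - 1) ∨ (a.val = n - 1 ∧ b.val = n - 2)

/-- The digraph `F'ᵢ` (for `2 ≤ i ≤ n-3`): the `(n-1)`-cycle
`v₁ → v_{n-1} → v_{n-2} → ⋯ → v₂ → v₁` together with the arcs `v₁ → v_{n-2}`,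
`v_{i+1} → vₙ` and `vₙ → v_{i-1}`. -/
def FpAdj (n i : ℕ) : Fin n → Fin n → Prop := fun a b =>
  (a.val = 0 ∧ b.val = n - 2) ∨ (a.val = b.val + 1 ∧ 1 ≤ a.val ∧ a.val ≤ n - 2) ∨
  (a.val = 0 ∧ b.val = n - 3) ∨ (a.val = i ∧ b.val = n - 1) ∨ (a.val = n - 1 ∧ b.val = i - 2)

/-- The digraph `𝓑₁`: `Cₙ` together with the arcs `v₁ → v_{n-3}` and `v₃ → v_{n-1}`. -/
def B1Adj (n : ℕ) : Fin n → Fin n → Prop := fun a b =>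
  CnAdj n a b ∨ (a.val = 0 ∧ b.val = n - 4) ∨ (a.val = 2 ∧ b.val = n - 2)

/-- The digraph `𝓑₂`: `Cₙ` together with the arcs `v₁ → v_{n-3}` and `v₄ → vₙ`. -/
def B2Adj (n : ℕ) : Fin n → Fin n → Prop := fun a b =>
  CnAdj n a b ∨ (a.val = 0 ∧ b.val = n - 4) ∨ (a.val = 3 ∧ b.val = n - 1)

/-- The digraph `𝓑₃`: `Cₙ` together with the arcs `v₁ → v_{n-3}`, `v₂ → v_{n-2}`
and `v₄ → vₙ`. -/
def B3Adj (n : ℕ) : Fin n → Fin n → Prop := fun a b =>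
  CnAdj n a b ∨ (a.val = 0 ∧ b.val = n - 4) ∨ (a.val = 1 ∧ b.val = n - 3) ∨
  (a.val = 3 ∧ b.val = n - 1)

/-- The digraph `𝓑₄`: `Cₙ` together with the arcs `v₁ → v_{n-3}`, `v₃ → v_{n-1}`
and `v₄ → vₙ`. -/
def B4Adj (n : ℕ) : Fin n → Fin n → Prop := fun a b =>
  CnAdj n a b ∨ (a.val = 0 ∧ b.val = n - 4) ∨ (a.val = 2 ∧ b.val = n - 2) ∨
  (a.val = 3 ∧ b.val = n - 1)

/-!
Switching signs by the descending paths `x → x - 1 → ⋯ → 0` makes every arc `x + 1 → x`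
positive. The arc `0 → n - 1` then carries the sign `δ` of the Hamilton cycle and, since all
`c`-cycles (`c = n - k`) have the same sign, every chord carries the sign `ε` of the short cycles.
So a walk from `u` to `v` with `w` Hamilton arcs and `a` chords has length `u - v + w n + a c`
and, up to a factor depending only on `u` and `v`, sign `δ ^ w * ε ^ a`.

As `gcd(n, c) = 1`, the counts of two walks of equal length with the same ends differ by a
multiple of `(c, -n)`. Nonpowerfulness therefore forces `δ ^ c * ε ^ n = -1`, and two walks
trading `n` chord loops for `c` Hamilton loops have different signs. The Frobenius bound for
`{n, c}` yields such pairs from `u` to any `v` at every length exceeding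
`l = u + 2nc + 1 - 2c - i`, while at length `l` the counts of all walks to `v_{c+i}` (to `v_1`
when `c + i = n + 1`) are forced, so there is no SSSD pair. Hence the local base at `u : Fin n`,
that is at `v_{u+1}`, is `l + 1`, which increases with `u`.
-/

open Finset Fin.NatCast

theorem kthSmallest_eq_of_monotone {N : ℕ} {f : Fin N → ℕ} (hf : Monotone f) {m : ℕ}
    (hm1 : 1 ≤ m) (hm2 : m ≤ N) : kthSmallest f m = f ⟨m - 1, by omega⟩ := by
  have hsorted : (List.ofFn f).Pairwise (· ≤ ·) :=
    List.pairwise_ofFn.mpr fun _ _ h => hf h.le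
  rw [kthSmallest, Fin.univ_val_map, Multiset.coe_sort,
    List.mergeSort_eq_self (r := fun a b => a ≤ b) hsorted,
    List.getD_eq_getElem _ _ (by rw [List.length_ofFn]; omega), List.getElem_ofFn]

theorem Nat.exists_eq_add_mul_of_coprime {n c w₁ a₁ w₂ a₂ : ℕ} (hc : 0 < c)
    (hnc : n.Coprime c) (h : w₁ * n + a₁ * c = w₂ * n + a₂ * c) (hw : w₂ ≤ w₁) :
    ∃ s, w₁ = w₂ + c * s ∧ a₂ = a₁ + n * s := by
  obtain ⟨d, rfl⟩ := Nat.exists_eq_add_of_le hw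
  have hd : d * n + a₁ * c = a₂ * c := by linarith [add_mul w₂ d n]
  have hcd : c ∣ d * n := (Nat.dvd_add_left (dvd_mul_left c a₁)).mp (hd ▸ dvd_mul_left c a₂)
  obtain ⟨s, rfl⟩ := hnc.symm.dvd_of_dvd_mul_right hcd
  refine ⟨s, rfl, Nat.eq_of_mul_eq_mul_right hc ?_⟩
  rw [← hd]
  ring

theorem Nat.exists_mul_add_mul_eq_of_coprime {n c M : ℕ} (hn : 0 < n) (hc : 0 < c)
    (hnc : n.Coprime c) (hM : n * c + 1 ≤ M + n + c) : ∃ w b, w * n + b * c = M := by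
  refine Nat.exists_add_mul_eq_of_gcd_dvd_of_mul_pred_le n c M
    (by rw [hnc.gcd_eq_one]; exact one_dvd M) ?_
  obtain ⟨n, rfl⟩ := Nat.exists_eq_succ_of_ne_zero hn.ne'
  obtain ⟨c, rfl⟩ := Nat.exists_eq_succ_of_ne_zero hc.ne'
  rw [Nat.pred_succ, Nat.pred_succ]
  linarith [Nat.succ_mul n (c + 1), Nat.mul_succ n c]

theorem Nat.eq_of_mul_add_mul_eq_two_mul {n c w a : ℕ} (hn : 0 < n) (hc : 0 < c)
    (hnc : n.Coprime c) (h : w * n + (a + 1) * c = 2 * (n * c)) (hwa : 0 < a → 0 < w) :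
    w = c ∧ a + 1 = n := by
  have h' : w * n + (a + 1) * c = c * n + n * c := by rw [h]; ring
  rcases le_total c w with hcw | hwc
  · obtain ⟨s, rfl, hs⟩ := Nat.exists_eq_add_mul_of_coprime hc hnc h' hcw
    obtain rfl : s = 0 := by
      by_contra hs0
      have := Nat.le_mul_of_pos_right n (Nat.pos_of_ne_zero hs0)
      omega
    omega
  · obtain ⟨s, hs, ha⟩ := Nat.exists_eq_add_mul_of_coprime hc hnc h'.symm hwc
    rcases Nat.eq_zero_or_pos s with rfl | hs0
    · omega
    · have := Nat.le_mul_of_pos_right c hs0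
      have := Nat.le_mul_of_pos_right n hs0
      have := hwa (by omega)
      omega

theorem pow_mul_pow_eq_of_coprime {M : Type*} [CommMonoid M] {x y : M} {n c : ℕ} (hc : 0 < c)
    (hnc : n.Coprime c) (hxy : x ^ c = y ^ n) {w₁ a₁ w₂ a₂ : ℕ}
    (h : w₁ * n + a₁ * c = w₂ * n + a₂ * c) : x ^ w₁ * y ^ a₁ = x ^ w₂ * y ^ a₂ := by
  wlog hw : w₂ ≤ w₁ generalizing w₁ a₁ w₂ a₂
  · exact (this h.symm (by omega)).symm
  obtain ⟨s, rfl, rfl⟩ := Nat.exists_eq_add_mul_of_coprime hc hnc h hw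
  rw [pow_add, pow_add, pow_mul, pow_mul, hxy]
  ac_rfl

section WeightedWalk

variable {V M : Type*} [CommMonoid M] (A : V → V → Prop) (ω : V → V → M)

def HasWeightedWalk (t : ℕ) (u v : V) (x : M) : Prop :=
  ∃ f : ℕ → V, f 0 = u ∧ f t = v ∧ IsWalk A t f ∧ ∏ j ∈ range t, ω (f j) (f (j + 1)) = x

variable {A ω}

theorem hasWeightedWalk_zero (u : V) : HasWeightedWalk A ω 0 u u 1 :=
  ⟨fun _ => u, rfl, rfl, fun _ h => absurd h (Nat.not_lt_zero _), prod_range_zero _⟩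

theorem hasWeightedWalk_one {u v : V} (h : A u v) : HasWeightedWalk A ω 1 u v (ω u v) :=
  ⟨fun j => if j = 0 then u else v, rfl, rfl, fun j hj => by simpa [Nat.lt_one_iff.mp hj] using h,
    by simp⟩

theorem HasWeightedWalk.append {t₁ t₂ : ℕ} {u v w : V} {x₁ x₂ : M}
    (h₁ : HasWeightedWalk A ω t₁ u v x₁) (h₂ : HasWeightedWalk A ω t₂ v w x₂) :
    HasWeightedWalk A ω (t₁ + t₂) u w (x₁ * x₂) := by
  obtain ⟨f, hf0, hft, hfw, rfl⟩ := h₁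
  obtain ⟨g, hg0, hgt, hgw, rfl⟩ := h₂
  set F : ℕ → V := fun j => if j ≤ t₁ then f j else g (j - t₁)
  have hF₁ : ∀ j ≤ t₁, F j = f j := fun j hj => if_pos hj
  have hF₂ : ∀ j, F (t₁ + j) = g j := by
    intro j
    rcases Nat.eq_zero_or_pos j with rfl | hj
    · simp [F, hft, hg0]
    · simp [F, show ¬ t₁ + j ≤ t₁ by omega]
  refine ⟨F, hF₁ 0 (Nat.zero_le _) ▸ hf0, by rw [hF₂, hgt], fun j hj => ?_, ?_⟩
  · rcases lt_or_ge j t₁ with hj₁ | hj₁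
    · rw [hF₁ j hj₁.le, hF₁ (j + 1) hj₁]
      exact hfw j hj₁
    · obtain ⟨d, rfl⟩ := Nat.exists_eq_add_of_le hj₁
      rw [hF₂, add_assoc, hF₂]
      exact hgw d (by omega)
  · rw [prod_range_add]
    congr 1
    · exact prod_congr rfl fun j hj => by
        rw [hF₁ j (mem_range.mp hj).le, hF₁ (j + 1) (mem_range.mp hj)]
    · exact prod_congr rfl fun j _ => by rw [hF₂, add_assoc, hF₂]

theorem HasWeightedWalk.pow {t : ℕ} {u : V} {x : M} (h : HasWeightedWalk A ω t u u x) (m : ℕ) :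
    HasWeightedWalk A ω (m * t) u u (x ^ m) := by
  induction m with
  | zero => simpa using hasWeightedWalk_zero u
  | succ m ih => simpa [add_mul, pow_succ] using ih.append h

theorem HasWeightedWalk.congr {t t' : ℕ} {u v : V} {x x' : M}
    (h : HasWeightedWalk A ω t u v x) (ht : t = t') (hx : x = x') :
    HasWeightedWalk A ω t' u v x' :=
  ht ▸ hx ▸ h

end WeightedWalk

namespace SignedDigraph

section Switching

variable {V : Type*} (S : SignedDigraph V)

def switchSgn (Q : V → ℤ) (a b : V) : ℤ := Q a * S.sgn a b * Q b

theorem walkSign_eq_switchSgn {Q : V → ℤ} (hQ : ∀ v, IsUnit (Q v)) (t : ℕ) (f : ℕ → V) :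
    S.walkSign t f = Q (f 0) * (∏ j ∈ range t, S.switchSgn Q (f j) (f (j + 1))) * Q (f t) := by
  induction t with
  | zero => simp [walkSign, Int.isUnit_mul_self (hQ _)]
  | succ t ih =>
    rw [walkSign, prod_range_succ, ← walkSign, ih, prod_range_succ, switchSgn]
    linear_combination -(Q (f 0) * (∏ j ∈ range t, S.switchSgn Q (f j) (f (j + 1))) * Q (f t) *
      S.sgn (f t) (f (t + 1))) * Int.isUnit_mul_self (hQ (f (t + 1)))

theorem isUnit_sgn {a b : V} (h : S.Adj a b) : IsUnit (S.sgn a b) :=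
  Int.isUnit_iff.mpr (S.sgn_unit a b h)

theorem isUnit_switchSgn {Q : V → ℤ} (hQ : ∀ v, IsUnit (Q v)) {a b : V} (h : S.Adj a b) :
    IsUnit (S.switchSgn Q a b) :=
  ((hQ a).mul (S.isUnit_sgn h)).mul (hQ b)

theorem hasSSSD_of_hasWeightedWalk {Q : V → ℤ} (hQ : ∀ v, IsUnit (Q v)) {t : ℕ} {u v : V}
    {x₁ x₂ : ℤ} (h₁ : HasWeightedWalk S.Adj (S.switchSgn Q) t u v x₁)
    (h₂ : HasWeightedWalk S.Adj (S.switchSgn Q) t u v x₂) (hx : x₁ ≠ x₂) : S.HasSSSD t u v := by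
  obtain ⟨f, hf0, hft, hfw, hfx⟩ := h₁
  obtain ⟨g, hg0, hgt, hgw, hgx⟩ := h₂
  refine ⟨f, g, ⟨hf0, hft, hfw⟩, ⟨hg0, hgt, hgw⟩, fun h => hx ?_⟩
  rw [S.walkSign_eq_switchSgn hQ, S.walkSign_eq_switchSgn hQ, hf0, hft, hg0, hgt, hfx, hgx] at h
  exact mul_left_cancel₀ (hQ u).ne_zero (mul_right_cancel₀ (hQ v).ne_zero h)

theorem localBase_eq_succ {u : V} {l : ℕ} (hge : ∀ t > l, ∀ v, S.HasSSSD t u v)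
    (hl : ∃ v, ¬ S.HasSSSD l u v) : S.localBase u = l + 1 := by
  refine (Nat.sInf_upward_closed_eq_succ_iff ?_ l).mpr ⟨hge, fun h => ?_⟩
  · exact fun k₁ k₂ hk h t ht => h t (hk.trans ht)
  · obtain ⟨v, hv⟩ := hl
    exact hv (h l le_rfl v)

end Switching

variable {n c i : ℕ} {S : SignedDigraph (Fin n)}

/-- A signed `D_{k,i}` satisfying the hypotheses of the theorem, described through the length
`c = n - k` of its short cycles (the vertex `v_{x+1}` is `x : Fin n`): the arcs are `x + 1 → x`,
`0 → n - 1` and the chords `τ → τ + c - 1` for `τ < i`. -/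
structure IsSignedDki (S : SignedDigraph (Fin n)) (c i : ℕ) : Prop where
  adj_iff : ∀ a b : Fin n, S.Adj a b ↔
    (a.val = 0 ∧ b.val = n - 1) ∨ a.val = b.val + 1 ∨ (a.val < i ∧ b.val + 1 = a.val + c)
  one_le_i : 1 ≤ i
  i_lt_c : i < c
  c_lt_n : c < n
  c_add_i_le : c + i ≤ n + 1
  coprime : n.Coprime c
  sameSignCycles : S.SameSignCycles c

theorem isSignedDki_of_dkiAdj {k : ℕ} (hk : 0 < k) (hgcd : Nat.gcd n (n - k) = 1) (hi1 : 1 ≤ i)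
    (hi2 : i ≤ min (k + 1) (n - k - 1)) (hadj : S.Adj = DkiAdj n k i)
    (hsgn : S.SameSignCycles (n - k)) : S.IsSignedDki (n - k) i := by
  rw [le_min_iff] at hi2
  refine ⟨fun a b => ?_, hi1, by omega, by omega, by omega, hgcd, hsgn⟩
  rw [hadj, DkiAdj, CnAdj, or_assoc]
  refine or_congr_right (or_congr_right ⟨?_, fun ⟨ha, hb⟩ => ⟨a.val + 1, ?_⟩⟩)
  · rintro ⟨j, hj1, hji, ha, hb⟩
    omega
  · omega

theorem IsSignedDki.adj_of_val_eq_succ (hS : S.IsSignedDki c i) {a b : Fin n}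
    (h : a.val = b.val + 1) : S.Adj a b :=
  (hS.adj_iff a b).mpr (Or.inr (Or.inl h))

theorem IsSignedDki.adj_chord (hS : S.IsSignedDki c i) {a b : Fin n} (ha : a.val < i)
    (hb : b.val + 1 = a.val + c) : S.Adj a b :=
  (hS.adj_iff a b).mpr (Or.inr (Or.inr ⟨ha, hb⟩))

variable [NeZero n] (S)

def descSign (x : Fin n) : ℤ := ∏ y ∈ range x.val, S.sgn ((y + 1 : ℕ) : Fin n) (y : Fin n)

/-- After switching by `descSign`, every arc `x + 1 → x` is positive, and the arcs `0 → n - 1`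
and `0 → c - 1` carry the signs of the Hamilton cycle and of the `c`-cycle through `0`. -/
def normSgn : Fin n → Fin n → ℤ := S.switchSgn S.descSign

def hamiltonSign : ℤ := S.normSgn 0 ((n - 1 : ℕ) : Fin n)

def chordSign (c : ℕ) : ℤ := S.normSgn 0 ((c - 1 : ℕ) : Fin n)

def chordCycle (c : ℕ) (a : Fin n) (s : ℕ) : Fin n :=
  if s = 0 then a else ((a.val + c - s : ℕ) : Fin n)

theorem descSign_of_val_eq_succ {a b : Fin n} (h : a.val = b.val + 1) :
    S.descSign a = S.descSign b * S.sgn a b := by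
  rw [descSign, h, prod_range_succ, ← h, Fin.cast_val_eq_self, Fin.cast_val_eq_self, descSign]

theorem normSgn_of_val_eq_zero {a b : Fin n} (ha : a.val = 0) (hb : b.val = n - 1) :
    S.normSgn a b = S.hamiltonSign := by
  rw [hamiltonSign, ← Fin.val_eq_zero_iff.mp ha, ← hb, Fin.cast_val_eq_self]

theorem normSgn_zero_of_val_add_one_eq {b : Fin n} (hb : b.val + 1 = c) :
    S.normSgn 0 b = S.chordSign c := by
  rw [chordSign, ← hb, Nat.add_sub_cancel, Fin.cast_val_eq_self]

theorem val_chordCycle {a : Fin n} (ha : a.val + c ≤ n) (s : ℕ) :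
    (chordCycle c a s).val = if s = 0 then a.val else a.val + c - s := by
  unfold chordCycle
  split_ifs
  · rfl
  · exact Fin.val_cast_of_lt (by omega)

variable {S}

namespace IsSignedDki

theorem adj_wrap (hS : S.IsSignedDki c i) : S.Adj 0 ((n - 1 : ℕ) : Fin n) :=
  (hS.adj_iff _ _).mpr
    (Or.inl ⟨Fin.val_zero n, Fin.val_cast_of_lt (by have := hS.c_lt_n; omega)⟩)

theorem isUnit_descSign (hS : S.IsSignedDki c i) (x : Fin n) : IsUnit (S.descSign x) :=
  IsUnit.prod_iff.mpr fun y hy => S.isUnit_sgn <| hS.adj_of_val_eq_succ <| by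
    have := mem_range.mp hy
    rw [Fin.val_cast_of_lt (by omega), Fin.val_cast_of_lt (by omega)]

theorem walkSign_eq (hS : S.IsSignedDki c i) (t : ℕ) (f : ℕ → Fin n) :
    S.walkSign t f = S.descSign (f 0) * (∏ j ∈ range t, S.normSgn (f j) (f (j + 1))) *
      S.descSign (f t) :=
  S.walkSign_eq_switchSgn hS.isUnit_descSign t f

theorem normSgn_of_val_eq_succ (hS : S.IsSignedDki c i) {a b : Fin n} (h : a.val = b.val + 1) :
    S.normSgn a b = 1 := by
  rw [normSgn, switchSgn, S.descSign_of_val_eq_succ h]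
  linear_combination (S.descSign b * S.descSign b) *
      Int.isUnit_mul_self (S.isUnit_sgn (hS.adj_of_val_eq_succ h)) +
    Int.isUnit_mul_self (hS.isUnit_descSign b)

theorem isUnit_hamiltonSign (hS : S.IsSignedDki c i) : IsUnit S.hamiltonSign :=
  S.isUnit_switchSgn hS.isUnit_descSign hS.adj_wrap

theorem isUnit_chordSign (hS : S.IsSignedDki c i) : IsUnit (S.chordSign c) := by
  have := hS.i_lt_c
  have := hS.c_lt_n
  refine S.isUnit_switchSgn hS.isUnit_descSign (hS.adj_chord ?_ ?_)
  · rw [Fin.val_zero]; exact hS.one_le_i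
  · rw [Fin.val_zero, Fin.val_cast_of_lt (by omega)]; omega

theorem isCycle_chordCycle (hS : S.IsSignedDki c i) {a : Fin n} (ha : a.val < i) :
    IsCycle S.Adj c (chordCycle c a) := by
  have := hS.i_lt_c
  have hval := val_chordCycle (c := c) (a := a) (by have := hS.c_add_i_le; omega)
  refine ⟨fun s hs => ?_, Fin.ext ?_, fun s hs s' hs' h => ?_⟩
  · rcases Nat.eq_zero_or_pos s with rfl | hs0
    · refine hS.adj_chord (by rwa [hval, if_pos rfl]) ?_
      rw [hval, hval, if_pos rfl, if_neg (Nat.add_one_ne_zero 0)]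
      omega
    · refine hS.adj_of_val_eq_succ ?_
      rw [hval, hval, if_neg hs0.ne', if_neg s.succ_ne_zero]
      omega
  · rw [hval, hval, if_neg (by omega), if_pos rfl]
    omega
  · have h := congrArg Fin.val h
    simp only [hval] at h
    split_ifs at h <;> omega

theorem walkSign_chordCycle (hS : S.IsSignedDki c i) {a : Fin n} (ha : a.val < i) :
    S.walkSign c (chordCycle c a) = S.normSgn a ((a.val + c - 1 : ℕ) : Fin n) := by
  have := hS.i_lt_c
  have := hS.c_add_i_le
  obtain ⟨d, rfl⟩ : ∃ d, c = d + 1 := ⟨c - 1, by omega⟩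
  have hdown : ∀ j ∈ range d,
      S.normSgn (chordCycle (d + 1) a (j + 1)) (chordCycle (d + 1) a (j + 1 + 1)) = 1 :=
    fun j hj => hS.normSgn_of_val_eq_succ <| by
      rw [val_chordCycle (by omega), val_chordCycle (by omega), if_neg j.succ_ne_zero,
        if_neg (j + 1).succ_ne_zero]
      have := mem_range.mp hj
      omega
  rw [hS.walkSign_eq, prod_range_succ', prod_eq_one hdown, one_mul]
  simp only [chordCycle, if_pos, zero_add, one_ne_zero, if_false, Nat.add_sub_cancel,
    Nat.add_eq_zero_iff, and_false, Fin.cast_val_eq_self]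
  rw [normSgn, switchSgn]
  linear_combination (S.descSign a * S.sgn a ((a.val + (d + 1) - 1 : ℕ) : Fin n) *
      S.descSign ((a.val + (d + 1) - 1 : ℕ) : Fin n)) *
    Int.isUnit_mul_self (hS.isUnit_descSign a)

theorem normSgn_chord (hS : S.IsSignedDki c i) {a b : Fin n} (ha : a.val < i)
    (hb : b.val + 1 = a.val + c) : S.normSgn a b = S.chordSign c := by
  have := hS.i_lt_c
  have := hS.c_lt_n
  have h0 : (0 : Fin n).val < i := by rw [Fin.val_zero]; exact hS.one_le_i
  have hb' : b = ((a.val + c - 1 : ℕ) : Fin n) := by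
    rw [← Fin.cast_val_eq_self b, show b.val = a.val + c - 1 by omega]
  rw [hb', ← hS.walkSign_chordCycle ha, hS.sameSignCycles _ _ (hS.isCycle_chordCycle ha)
    (hS.isCycle_chordCycle h0), hS.walkSign_chordCycle h0, S.normSgn_zero_of_val_add_one_eq]
  rw [Fin.val_cast_of_lt] <;> rw [Fin.val_zero] <;> omega

theorem exists_counts_of_isWalk (hS : S.IsSignedDki c i) {t : ℕ} {f : ℕ → Fin n}
    (hf : IsWalk S.Adj t f) :
    ∃ w a : ℕ, (f 0).val + w * n + a * c = t + (f t).val ∧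
      ∏ j ∈ range t, S.normSgn (f j) (f (j + 1)) = S.hamiltonSign ^ w * S.chordSign c ^ a ∧
      (w = 0 → 0 < a → (f t).val + 2 ≤ c + i) := by
  induction t with
  | zero => exact ⟨0, 0, by simp, by simp, fun _ h => absurd h (Nat.lt_irrefl 0)⟩
  | succ t ih =>
    obtain ⟨w, a, hlen, hsgn, hlast⟩ := ih fun j hj => hf j (by omega)
    rw [prod_range_succ, hsgn]
    have := (f (t + 1)).isLt
    rcases (hS.adj_iff _ _).mp (hf t (by omega)) with ⟨hwrap₀, hwrap₁⟩ | hdown | ⟨hchord, hb⟩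
    · refine ⟨w + 1, a, by rw [add_one_mul]; omega, ?_, fun h => absurd h w.succ_ne_zero⟩
      rw [S.normSgn_of_val_eq_zero hwrap₀ hwrap₁, pow_succ]
      ring
    · refine ⟨w, a, by omega, by rw [hS.normSgn_of_val_eq_succ hdown, mul_one], fun hw ha => ?_⟩
      have := hlast hw ha
      omega
    · refine ⟨w, a + 1, by rw [add_one_mul]; omega, ?_, fun _ _ => by omega⟩
      rw [hS.normSgn_chord hchord hb, pow_succ]
      ring

theorem not_hasSSSD_of_counts (hS : S.IsSignedDki c i) {t : ℕ} {u v : Fin n}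
    (h : ∀ w₁ a₁ w₂ a₂ : ℕ, u.val + w₁ * n + a₁ * c = t + v.val →
      u.val + w₂ * n + a₂ * c = t + v.val → (w₁ = 0 → 0 < a₁ → v.val + 2 ≤ c + i) →
      (w₂ = 0 → 0 < a₂ → v.val + 2 ≤ c + i) →
      S.hamiltonSign ^ w₁ * S.chordSign c ^ a₁ = S.hamiltonSign ^ w₂ * S.chordSign c ^ a₂) :
    ¬ S.HasSSSD t u v := by
  rintro ⟨f, g, ⟨hf0, hft, hfw⟩, ⟨hg0, hgt, hgw⟩, hne⟩
  obtain ⟨w₁, a₁, hlen₁, hprod₁, hlast₁⟩ := hS.exists_counts_of_isWalk hfw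
  obtain ⟨w₂, a₂, hlen₂, hprod₂, hlast₂⟩ := hS.exists_counts_of_isWalk hgw
  simp only [hf0, hft] at hlen₁ hlast₁
  simp only [hg0, hgt] at hlen₂ hlast₂
  apply hne
  rw [hS.walkSign_eq, hS.walkSign_eq, hf0, hft, hg0, hgt, hprod₁, hprod₂,
    h w₁ a₁ w₂ a₂ hlen₁ hlen₂ hlast₁ hlast₂]

theorem hamiltonSign_pow_mul_chordSign_pow (hS : S.IsSignedDki c i)
    (hpn : S.IsPrimitiveNonpowerful) : S.hamiltonSign ^ c * S.chordSign c ^ n = -1 := by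
  have hε := Int.isUnit_mul_self (hS.isUnit_chordSign.pow n)
  rcases Int.isUnit_eq_one_or ((hS.isUnit_hamiltonSign.pow c).mul (hS.isUnit_chordSign.pow n))
    with h | h
  · obtain ⟨l, -, hl⟩ := hpn
    refine absurd (hl l le_rfl 0 0) (hS.not_hasSSSD_of_counts fun w₁ a₁ w₂ a₂ h₁ h₂ _ _ => ?_)
    refine pow_mul_pow_eq_of_coprime (by have := hS.i_lt_c; omega) hS.coprime ?_ ?_
    · linear_combination S.chordSign c ^ n * h - S.hamiltonSign ^ c * hε
    · rw [Fin.val_zero] at h₁ h₂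
      omega
  · exact h

theorem exists_not_hasSSSD (hS : S.IsSignedDki c i) (u : Fin n) {l : ℕ}
    (hl : l + (2 * c + i) = u.val + 2 * (n * c) + 1) : ∃ v, ¬ S.HasSSSD l u v := by
  have := hS.i_lt_c
  have := hS.c_add_i_le
  have hn : 0 < n := by omega
  have hc : 0 < c := by omega
  -- the target is `v_{c+i}`, or `v_1` when `c + i = n + 1` and the cast wraps around
  refine ⟨((c + i - 1 : ℕ) : Fin n), hS.not_hasSSSD_of_counts fun w₁ a₁ w₂ a₂ h₁ h₂ hl₁ hl₂ => ?_⟩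
  rcases Nat.lt_or_ge (c + i - 1) n with hz | hz
  · rw [Fin.val_cast_of_lt hz] at h₁ h₂ hl₁ hl₂
    have key : ∀ w a, u.val + w * n + a * c = l + (c + i - 1) →
        (w = 0 → 0 < a → c + i - 1 + 2 ≤ c + i) → w = c ∧ a + 1 = n := fun w a hwa hla =>
      Nat.eq_of_mul_add_mul_eq_two_mul hn hc hS.coprime (by rw [add_one_mul]; omega)
        fun ha => Nat.pos_of_ne_zero fun hw => by have := hla hw ha; omega
    obtain ⟨rfl, ha₁⟩ := key w₁ a₁ h₁ hl₁
    obtain ⟨hw, ha₂⟩ := key w₂ a₂ h₂ hl₂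
    rw [hw, show a₁ = a₂ by omega]
  · rw [show c + i - 1 = n by omega, Fin.natCast_self, Fin.val_zero] at h₁ h₂
    have key : ∀ w a, u.val + w * n + a * c = l + 0 → w + 1 = c ∧ a + 1 = n := fun w a hwa =>
      Nat.eq_of_mul_add_mul_eq_two_mul hn hc hS.coprime
        (by rw [add_one_mul, add_one_mul]; omega) fun _ => w.succ_pos
    obtain ⟨hw₁, ha₁⟩ := key w₁ a₁ h₁
    obtain ⟨hw₂, ha₂⟩ := key w₂ a₂ h₂
    rw [show w₁ = w₂ by omega, show a₁ = a₂ by omega]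

theorem hasWeightedWalk_desc (hS : S.IsSignedDki c i) {a b : Fin n} (h : b.val ≤ a.val) :
    HasWeightedWalk S.Adj S.normSgn (a.val - b.val) a b 1 :=
  ⟨fun j => ⟨a.val - j, by omega⟩, Fin.ext (Nat.sub_zero _), Fin.ext (by dsimp only; omega),
    fun j hj => hS.adj_of_val_eq_succ (by dsimp only; omega),
    prod_eq_one fun j hj =>
      hS.normSgn_of_val_eq_succ (by have := mem_range.mp hj; dsimp only; omega)⟩

theorem hasWeightedWalk_wrap (hS : S.IsSignedDki c i) (v : Fin n) :
    HasWeightedWalk S.Adj S.normSgn (n - v.val) 0 v S.hamiltonSign := by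
  have := v.isLt
  have htop : ((n - 1 : ℕ) : Fin n).val = n - 1 := Fin.val_cast_of_lt (by omega)
  refine ((hasWeightedWalk_one hS.adj_wrap).append (hS.hasWeightedWalk_desc (b := v) ?_)).congr
    ?_ (mul_one _) <;> rw [htop] <;> omega

theorem hasWeightedWalk_chord (hS : S.IsSignedDki c i) {v : Fin n} (hv : v.val < c) :
    HasWeightedWalk S.Adj S.normSgn (c - v.val) 0 v (S.chordSign c) := by
  have := hS.i_lt_c
  have := hS.c_lt_n
  have hc : ((c - 1 : ℕ) : Fin n).val = c - 1 := Fin.val_cast_of_lt (by omega)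
  have hchord : S.Adj 0 ((c - 1 : ℕ) : Fin n) :=
    hS.adj_chord (by rw [Fin.val_zero]; exact hS.one_le_i) (by rw [hc, Fin.val_zero]; omega)
  refine ((hasWeightedWalk_one hchord).append (hS.hasWeightedWalk_desc (b := v) ?_)).congr
    ?_ (mul_one _) <;> rw [hc] <;> omega

theorem hasWeightedWalk_to_zero (hS : S.IsSignedDki c i) (u : Fin n) (w a : ℕ) :
    HasWeightedWalk S.Adj S.normSgn (u.val + (w * n + a * c)) u 0
      (S.hamiltonSign ^ w * S.chordSign c ^ a) := by
  have hloop := hS.hasWeightedWalk_wrap 0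
  have hchordLoop := hS.hasWeightedWalk_chord (v := 0)
    (by rw [Fin.val_zero]; exact Nat.zero_lt_of_lt hS.i_lt_c)
  have hdesc := hS.hasWeightedWalk_desc (a := u) (b := 0) (Nat.zero_le _)
  rw [Fin.val_zero, Nat.sub_zero] at hloop hchordLoop hdesc
  exact (hdesc.append ((hloop.pow w).append (hchordLoop.pow a))).congr rfl (one_mul _)

theorem hasWeightedWalk_shortcut (hS : S.IsSignedDki c i) {v : Fin n} (hv : v.val + 2 ≤ c + i) :
    ∃ a ≤ 2, v.val < a * c ∧
      HasWeightedWalk S.Adj S.normSgn (a * c - v.val) 0 v (S.chordSign c ^ a) := by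
  rcases Nat.lt_or_ge v.val c with hvc | hvc
  · exact ⟨1, by norm_num, by omega, by simpa using hS.hasWeightedWalk_chord hvc⟩
  · have := hS.i_lt_c
    have := hS.c_add_i_le
    set τ : Fin n := ((v.val - c + 1 : ℕ) : Fin n)
    have hτ : τ.val = v.val - c + 1 := Fin.val_cast_of_lt (by omega)
    refine ⟨2, le_rfl, by omega, ((hS.hasWeightedWalk_chord (v := τ) (by omega)).append
      (hasWeightedWalk_one (hS.adj_chord (b := v) (by omega) (by omega)))).congr (by omega) ?_⟩
    rw [hS.normSgn_chord (by omega) (by omega)]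
    ring

theorem hasSSSD_of_hasWeightedWalk_pair (hS : S.IsSignedDki c i)
    (hkey : S.hamiltonSign ^ c * S.chordSign c ^ n = -1) {t : ℕ} {u v : Fin n} {x : ℤ}
    (hx : IsUnit x) (h₁ : HasWeightedWalk S.Adj S.normSgn t u v (x * S.chordSign c ^ n))
    (h₂ : HasWeightedWalk S.Adj S.normSgn t u v (x * S.hamiltonSign ^ c)) : S.HasSSSD t u v :=
  S.hasSSSD_of_hasWeightedWalk hS.isUnit_descSign h₁ h₂ fun h => by
    rw [← mul_left_cancel₀ hx.ne_zero h, Int.isUnit_mul_self (hS.isUnit_chordSign.pow n)] at hkey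
    exact absurd hkey (by norm_num)

theorem hasSSSD_of_wrap (hS : S.IsSignedDki c i)
    (hkey : S.hamiltonSign ^ c * S.chordSign c ^ n = -1) {u v : Fin n} {t : ℕ}
    (ht : u.val + 2 * (n * c) + 1 ≤ t + v.val + c) : S.HasSSSD t u v := by
  have := hS.one_le_i
  have := hS.i_lt_c
  have := hS.c_lt_n
  have := v.isLt
  have := add_le_mul (a := n) (b := c) (by omega) (by omega)
  obtain ⟨M, hM⟩ : ∃ M, t + v.val = u.val + n + n * c + M :=
    ⟨_, (Nat.add_sub_cancel' (by omega)).symm⟩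
  obtain ⟨w, b, rfl⟩ :=
    Nat.exists_mul_add_mul_eq_of_coprime (by omega) (by omega) hS.coprime (M := M) (by omega)
  refine hS.hasSSSD_of_hasWeightedWalk_pair hkey
    ((hS.isUnit_hamiltonSign.pow (w + 1)).mul (hS.isUnit_chordSign.pow b))
    (((hS.hasWeightedWalk_to_zero u w (n + b)).append (hS.hasWeightedWalk_wrap v)).congr
      (by rw [add_mul]; omega) (by ring))
    (((hS.hasWeightedWalk_to_zero u (w + c) b).append (hS.hasWeightedWalk_wrap v)).congr
      (by rw [add_mul, mul_comm c]; omega) (by ring))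

theorem hasSSSD_of_shortcut (hS : S.IsSignedDki c i)
    (hkey : S.hamiltonSign ^ c * S.chordSign c ^ n = -1) {u v : Fin n} {t : ℕ}
    (hv : v.val + 2 ≤ c + i) (ht : u.val + 2 * (n * c) + 1 ≤ t + v.val + n + c) :
    S.HasSSSD t u v := by
  have := hS.one_le_i
  have := hS.i_lt_c
  have := hS.c_lt_n
  have := v.isLt
  have := add_le_mul (a := n) (b := c) (by omega) (by omega)
  obtain ⟨M, hM⟩ : ∃ M, t + v.val = u.val + n * c + M :=
    ⟨_, (Nat.add_sub_cancel' (by omega)).symm⟩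
  obtain ⟨w, b, rfl⟩ :=
    Nat.exists_mul_add_mul_eq_of_coprime (by omega) (by omega) hS.coprime (M := M) (by omega)
  obtain ⟨a, ha, hva, hshort⟩ := hS.hasWeightedWalk_shortcut hv
  have e₁ : (n + b - a) * c + a * c = n * c + b * c := by
    rw [← add_mul, Nat.sub_add_cancel (by omega), add_mul]
  have e₂ : (w + c - 1) * n + n = w * n + n * c := by
    rw [← Nat.succ_mul, Nat.succ_eq_add_one, Nat.sub_add_cancel (by omega), add_mul, mul_comm c]
  refine hS.hasSSSD_of_hasWeightedWalk_pair hkey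
    ((hS.isUnit_hamiltonSign.pow w).mul (hS.isUnit_chordSign.pow b))
    (((hS.hasWeightedWalk_to_zero u w (n + b - a)).append hshort).congr (by omega) ?_)
    (((hS.hasWeightedWalk_to_zero u (w + c - 1) b).append (hS.hasWeightedWalk_wrap v)).congr
      (by omega) ?_)
  · rw [mul_assoc, ← pow_add, Nat.sub_add_cancel (by omega), pow_add]
    ring
  · rw [mul_right_comm, pow_sub_one_mul (by omega), pow_add]
    ring

theorem hasSSSD_of_lt (hS : S.IsSignedDki c i)
    (hkey : S.hamiltonSign ^ c * S.chordSign c ^ n = -1) {u v : Fin n} {t : ℕ}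
    (ht : u.val + 2 * (n * c) + 1 < t + (2 * c + i)) : S.HasSSSD t u v := by
  have := hS.c_add_i_le
  by_cases hv : v.val + 2 ≤ c + i
  · exact hS.hasSSSD_of_shortcut hkey hv (by omega)
  · exact hS.hasSSSD_of_wrap hkey (by omega)

theorem localBase_add (hS : S.IsSignedDki c i) (hpn : S.IsPrimitiveNonpowerful) (u : Fin n) :
    S.localBase u + (2 * c + i) = u.val + 2 * (n * c) + 2 := by
  have := hS.i_lt_c
  have := hS.c_lt_n
  have : 2 * c ≤ n * c := Nat.mul_le_mul_right c (by omega)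
  obtain ⟨l, hl⟩ : ∃ l, l + (2 * c + i) = u.val + 2 * (n * c) + 1 :=
    ⟨_, Nat.sub_add_cancel (by omega)⟩
  have hkey := hS.hamiltonSign_pow_mul_chordSign_pow hpn
  rw [S.localBase_eq_succ (fun t ht v => hS.hasSSSD_of_lt hkey (by omega))
    (hS.exists_not_hasSSSD u hl)]
  omega

end IsSignedDki

end SignedDigraph

/-- Let `gcd(n, n-k) = 1`, `1 ≤ i ≤ min{k+1, n-k-1}`, and let
`S_{k,i}` be a primitive nonpowerful signed digraph with underlying digraph
`D_{k,i}`. If all cycles of length `n-k` have the same sign, then for every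
`1 ≤ m ≤ n` the `m`-th smallest local base is attained at `v_m` and equals
`(2n-2)(n-k) + 1 - i + m`. -/
theorem stmt2 (n k i : ℕ) (hk : 0 < k)
    (hgcd : Nat.gcd n (n - k) = 1)
    (hi1 : 1 ≤ i) (hi2 : i ≤ min (k + 1) (n - k - 1))
    (S : SignedDigraph (Fin n)) (hadj : S.Adj = DkiAdj n k i)
    (hpn : S.IsPrimitiveNonpowerful)
    (hsgn : S.SameSignCycles (n - k)) :
    ∀ m : ℕ, ∀ _hm1 : 1 ≤ m, ∀ _hm2 : m ≤ n,
      kthSmallest S.localBase m = S.localBase ⟨m - 1, by omega⟩ ∧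
      S.localBase ⟨m - 1, by omega⟩ = (2 * n - 2) * (n - k) + 1 - i + m := by
  intro m hm1 hm2
  have hS := SignedDigraph.isSignedDki_of_dkiAdj hk hgcd hi1 hi2 hadj hsgn
  have : NeZero n := ⟨by have := hS.c_lt_n; omega⟩
  have hbase := hS.localBase_add hpn
  refine ⟨kthSmallest_eq_of_monotone (fun a b (hab : a.val ≤ b.val) => ?_) hm1 hm2, ?_⟩
  · linarith [hbase a, hbase b]
  · have hm := hbase ⟨m - 1, by omega⟩
    rw [Fin.val_mk] at hm
    have := hS.i_lt_c
    have : (2 * n - 2) * (n - k) + 2 * (n - k) = 2 * (n * (n - k)) := by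
      rw [← add_mul, Nat.sub_add_cancel (by omega)]
      ring
    have : 2 * (n - k) ≤ (2 * n - 2) * (n - k) := Nat.mul_le_mul_right _ (by omega)
    omega
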